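/- Let A be an n×n real matrix, B an m×m real matrix, y ∈ ℝᵐ, and μ ∈ ℝ. If B y = μ y and the entries of y sum to zero (1ₘᵀ y = 0), then (A ⋄ B)(1ₙ ⊗ y) = n μ (1ₙ ⊗ y), where 1ₖ denotes the all-ones vector of length k. -/

import Mathlib

open Matrix Kronecker

/-- The `k × k` all-ones matrix `J_k`. -/
def onesMat (k : ℕ) : Matrix (Fin k) (Fin k) ℝ := Matrix.of fun _ _ => 1

/-- The additive Kronecker analogue `A ⋄ B = A ⊗ J_m + J_n ⊗ B`. -/
def diamond {n m : ℕ} (A : Matrix (Fin n) (Fin n) ℝ) (B : Matrix (Fin m) (Fin m) ℝ) :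
    Matrix (Fin n × Fin m) (Fin n × Fin m) ℝ :=
  A ⊗ₖ onesMat m + onesMat n ⊗ₖ B

/-- The Kronecker product of two vectors. -/
def vecKron {n m : ℕ} (x : Fin n → ℝ) (y : Fin m → ℝ) : Fin n × Fin m → ℝ :=
  fun p => x p.1 * y p.2

/-- The all-ones vector `1_k`. -/
def onesVec (k : ℕ) : Fin k → ℝ := fun _ => 1

/-! The first summand `A ⊗ J_m` of `A ⋄ B` kills `1_n ⊗ y` because `J_m y = (∑ y) 1_m = 0`;
the second acts as `(J_n 1_n) ⊗ (B y) = (n 1_n) ⊗ (μ y)`. Both follow from the mixed-product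
rule `(A ⊗ B)(x ⊗ y) = (A x) ⊗ (B y)`. -/

theorem kronecker_mulVec_vecKron {p q n m : ℕ} (A : Matrix (Fin p) (Fin n) ℝ)
    (B : Matrix (Fin q) (Fin m) ℝ) (x : Fin n → ℝ) (y : Fin m → ℝ) :
    (A ⊗ₖ B) *ᵥ vecKron x y = vecKron (A *ᵥ x) (B *ᵥ y) := by
  ext ⟨i, j⟩
  simp only [mulVec, dotProduct, kroneckerMap_apply, vecKron, Fintype.sum_prod_type,
    Finset.sum_mul_sum]
  exact Finset.sum_congr rfl fun _ _ => Finset.sum_congr rfl fun _ _ => by ring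

theorem onesMat_mulVec (k : ℕ) (x : Fin k → ℝ) :
    onesMat k *ᵥ x = (∑ i, x i) • onesVec k := by
  ext i
  simp [onesMat, onesVec, mulVec, dotProduct]

theorem onesMat_mulVec_onesVec (k : ℕ) : onesMat k *ᵥ onesVec k = (k : ℝ) • onesVec k := by
  simp [onesMat_mulVec, onesVec]

theorem vecKron_zero_right {n m : ℕ} (x : Fin n → ℝ) : vecKron x (0 : Fin m → ℝ) = 0 := by
  ext p
  simp [vecKron]

theorem vecKron_smul_smul {n m : ℕ} (a b : ℝ) (x : Fin n → ℝ) (y : Fin m → ℝ) :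
    vecKron (a • x) (b • y) = (a * b) • vecKron x y := by
  ext p
  simp only [vecKron, Pi.smul_apply, smul_eq_mul]
  ring

/-- If `B y = μ y` and the entries of `y` sum to zero, then
`(A ⋄ B)(1_n ⊗ y) = n μ (1_n ⊗ y)`. -/
theorem diamond_mulVec_onesVec_vecKron {n m : ℕ}
    (A : Matrix (Fin n) (Fin n) ℝ) (B : Matrix (Fin m) (Fin m) ℝ)
    (y : Fin m → ℝ) (mu : ℝ)
    (hBy : B.mulVec y = mu • y) (hy : ∑ j, y j = 0) :
    (diamond A B).mulVec (vecKron (onesVec n) y) =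
      ((n : ℝ) * mu) • vecKron (onesVec n) y := by
  have hJy : onesMat m *ᵥ y = 0 := by rw [onesMat_mulVec, hy, zero_smul]
  rw [diamond, add_mulVec, kronecker_mulVec_vecKron, kronecker_mulVec_vecKron, hJy, hBy,
    onesMat_mulVec_onesVec, vecKron_zero_right, vecKron_smul_smul, zero_add]
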